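/- arXiv:1805.01207 — 7 statements merged into one kernel-verified Lean document; each statement's English description precedes it below -/
import Mathlib

section
/- For a multiplicative hom-associative algebra (A, μ, α), the Hochschild-type coboundary operator δ_α satisfies δ_α² = 0 on the cochain complex C•_α(A,A). -/
/-!
Write `δ_α = ∑ᵢ (-1)ⁱ dᵢ` with face maps `d₀, …, d_{N+1}`: the outer faces multiply by
`α^{N-1}` of the first or last argument, the inner face `dᵢ` multiplies `aᵢ` with `aᵢ₊₁` and
applies `α` to the other arguments. Hom-associativity, multiplicativity of `α` and
`α ∘ f = f ∘ α^{⊗n}` give the simplicial identities `dᵢ dⱼ = dⱼ dᵢ₋₁` for `j < i`, and these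
pair off the terms of `δ_α²` with opposite signs.
-/

/-- Reindex a tuple along an equality of lengths. -/
def reindex {A : Type*} {p q : ℕ} (h : q = p) (a : Fin p → A) : Fin q → A :=
  fun k => a (Fin.cast h k)

/-- `f` commutes with `α`, i.e. `α ∘ f = f ∘ α^{⊗n}` (membership condition for `Cⁿ_α`/`V^α`). -/
def IsCompat {A : Type*} (α : A → A) {n : ℕ} (f : (Fin n → A) → A) : Prop :=
  ∀ a : Fin n → A, α (f a) = f fun i => α (a i)

/-- The α-twisted Hochschild coboundary on `n`-cochains. -/
def homDelta {A : Type*} [AddCommGroup A] (μ : A → A → A) (α : A → A) (n : ℕ)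
    (f : (Fin n → A) → A) : (Fin (n + 1) → A) → A := fun a =>
  μ (α^[n - 1] (a 0)) (f fun i => a i.succ)
    + ∑ i : Fin n, ((-1 : ℤ) ^ ((i : ℕ) + 1)) •
        f (fun j => if (j : ℕ) < (i : ℕ) then α (a j.castSucc)
          else if (j : ℕ) = (i : ℕ) then μ (a j.castSucc) (a j.succ)
          else α (a j.succ))
    + ((-1 : ℤ) ^ (n + 1)) • μ (f fun i => a i.castSucc) (α^[n - 1] (a (Fin.last n)))

/-- The α-twisted insertion `f ∘ᵢ g` for `f ∈ V^α_m`, `g ∈ V^α_n`. -/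
def circI {A : Type*} (α : A → A) {m n : ℕ} (i : Fin (m + 1))
    (f : (Fin (m + 1) → A) → A) (g : (Fin (n + 1) → A) → A) :
    (Fin (m + n + 1) → A) → A := fun a =>
  f fun k => if (k : ℕ) < (i : ℕ) then α^[n] (a ⟨(k : ℕ), by omega⟩)
    else if (k : ℕ) = (i : ℕ) then g (fun l => a ⟨(i : ℕ) + (l : ℕ), by omega⟩)
    else α^[n] (a ⟨(k : ℕ) + n, by omega⟩)

/-- The α-twisted pre-Lie product `f ∘ g = Σᵢ (-1)^{ni} f ∘ᵢ g`. -/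
def vcirc {A : Type*} [AddCommGroup A] (α : A → A) {m n : ℕ}
    (f : (Fin (m + 1) → A) → A) (g : (Fin (n + 1) → A) → A) :
    (Fin (m + n + 1) → A) → A := fun a =>
  ∑ i : Fin (m + 1), ((-1 : ℤ) ^ (n * (i : ℕ))) • circI α i f g a

/-- The graded (Gerstenhaber) bracket `[f,g] = f ∘ g - (-1)^{mn} g ∘ f` on `⊕ V^α_m`. -/
def vbracket {A : Type*} [AddCommGroup A] (α : A → A) {m n : ℕ}
    (f : (Fin (m + 1) → A) → A) (g : (Fin (n + 1) → A) → A) :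
    (Fin (m + n + 1) → A) → A := fun a =>
  vcirc α f g a - ((-1 : ℤ) ^ (m * n)) • vcirc α g f (reindex (by omega) a)

/-- The cup product of an `(m+1)`-cochain and an `(n+1)`-cochain. -/
def cupProd {A : Type*} (μ : A → A → A) (α : A → A) {m n : ℕ}
    (f : (Fin (m + 1) → A) → A) (g : (Fin (n + 1) → A) → A) :
    (Fin (m + n + 2) → A) → A := fun a =>
  μ (α^[n] (f fun i => a ⟨(i : ℕ), by omega⟩))
    (α^[m] (g fun i => a ⟨m + 1 + (i : ℕ), by omega⟩))

open Finset

section Faces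

variable {A : Type*}

def homFace (μ : A → A → A) (α : A → A) (N i : ℕ) (f : (Fin N → A) → A) :
    (Fin (N + 1) → A) → A := fun a =>
  if i = 0 then μ (α^[N - 1] (a 0)) (f fun k => a k.succ)
  else if i = N + 1 then μ (f fun k => a k.castSucc) (α^[N - 1] (a (Fin.last N)))
  else f fun j => if (j : ℕ) < i - 1 then α (a j.castSucc)
    else if (j : ℕ) = i - 1 then μ (a j.castSucc) (a j.succ)
    else α (a j.succ)

variable {μ : A → A → A} {α : A → A}

theorem homFace_zero (N : ℕ) (f : (Fin N → A) → A) (a : Fin (N + 1) → A) :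
    homFace μ α N 0 f a = μ (α^[N - 1] (a 0)) (f fun k => a k.succ) := by
  simp [homFace]

theorem homFace_last (N : ℕ) (f : (Fin N → A) → A) (a : Fin (N + 1) → A) :
    homFace μ α N (N + 1) f a = μ (f fun k => a k.castSucc) (α^[N - 1] (a (Fin.last N))) := by
  simp [homFace]

theorem homFace_of_ne {N i : ℕ} (h0 : i ≠ 0) (hlast : i ≠ N + 1) (f : (Fin N → A) → A)
    (a : Fin (N + 1) → A) :
    homFace μ α N i f a = f fun j => if (j : ℕ) < i - 1 then α (a j.castSucc)
      else if (j : ℕ) = i - 1 then μ (a j.castSucc) (a j.succ)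
      else α (a j.succ) := by
  simp [homFace, h0, hlast]

variable {m : ℕ} {f : (Fin (m + 1) → A) → A}

theorem homFace_one_homFace_zero (hassoc : ∀ a b c : A, μ (α a) (μ b c) = μ (μ a b) (α c))
    (hmult : ∀ a b : A, α (μ a b) = μ (α a) (α b)) (hf : IsCompat α f) (a : Fin (m + 3) → A) :
    homFace μ α (m + 2) 1 (homFace μ α (m + 1) 0 f) a
      = homFace μ α (m + 2) 0 (homFace μ α (m + 1) 0 f) a := by
  rw [homFace_of_ne one_ne_zero (by omega), homFace_zero, homFace_zero, homFace_zero]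
  simp only [Fin.val_zero, Fin.val_succ, Fin.castSucc_zero, Nat.lt_irrefl, Nat.not_lt_zero,
    Nat.add_one_ne_zero, if_false, if_true, Nat.sub_self, Nat.add_sub_cancel,
    show m + 2 - 1 = m + 1 by omega]
  rw [(Function.Semiconj₂.iterate hmult m).eq, Function.iterate_succ_apply', hassoc, hf]

theorem homFace_homFace_zero {i : ℕ} (hi : 2 ≤ i) (hi' : i ≤ m + 2) (a : Fin (m + 3) → A) :
    homFace μ α (m + 2) i (homFace μ α (m + 1) 0 f) a
      = homFace μ α (m + 2) 0 (homFace μ α (m + 1) (i - 1) f) a := by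
  rw [homFace_of_ne (by omega) (by omega), homFace_zero, homFace_zero,
    homFace_of_ne (by omega) (by omega)]
  simp only [Fin.val_zero, Fin.castSucc_zero, show 0 < i - 1 by omega, if_true,
    Nat.add_sub_cancel, show m + 2 - 1 = m + 1 by omega, Function.iterate_succ_apply]
  refine congrArg _ (congrArg f (funext fun k => ?_))
  simp only [Fin.val_succ, Fin.succ_castSucc]
  split_ifs <;> first | rfl | omega

theorem homFace_last_homFace_zero (hassoc : ∀ a b c : A, μ (α a) (μ b c) = μ (μ a b) (α c))
    (a : Fin (m + 3) → A) :
    homFace μ α (m + 2) (m + 3) (homFace μ α (m + 1) 0 f) a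
      = homFace μ α (m + 2) 0 (homFace μ α (m + 1) (m + 2) f) a := by
  rw [homFace_last, homFace_zero, homFace_zero, homFace_last]
  simp only [Fin.castSucc_zero, Nat.add_sub_cancel, show m + 2 - 1 = m + 1 by omega,
    Fin.succ_last, Fin.succ_castSucc, Function.iterate_succ_apply', hassoc]

theorem homFace_last_homFace_last (hassoc : ∀ a b c : A, μ (α a) (μ b c) = μ (μ a b) (α c))
    (hmult : ∀ a b : A, α (μ a b) = μ (α a) (α b)) (hf : IsCompat α f) (a : Fin (m + 3) → A) :
    homFace μ α (m + 2) (m + 3) (homFace μ α (m + 1) (m + 2) f) a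
      = homFace μ α (m + 2) (m + 2) (homFace μ α (m + 1) (m + 2) f) a := by
  rw [homFace_last, homFace_last, homFace_of_ne (by omega) (by omega), homFace_last]
  simp only [Nat.add_sub_cancel, show m + 2 - 1 = m + 1 by omega, Fin.val_castSucc,
    Fin.val_last, Fin.is_lt, if_true, lt_irrefl, if_false]
  rw [(Function.Semiconj₂.iterate hmult m).eq, ← hf, Function.iterate_succ_apply', hassoc,
    Fin.succ_last]

theorem homFace_last_homFace {j : ℕ} (hj : 1 ≤ j) (hj' : j ≤ m + 1) (a : Fin (m + 3) → A) :
    homFace μ α (m + 2) (m + 3) (homFace μ α (m + 1) j f) a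
      = homFace μ α (m + 2) j (homFace μ α (m + 1) (m + 2) f) a := by
  rw [homFace_last, homFace_of_ne (by omega) (by omega), homFace_of_ne (by omega) (by omega),
    homFace_last]
  simp only [Nat.add_sub_cancel, show m + 2 - 1 = m + 1 by omega, Fin.val_castSucc,
    Fin.val_last, if_neg (show ¬ m + 1 < j - 1 by omega), if_neg (show ¬ m + 1 = j - 1 by omega),
    Fin.succ_last, Fin.succ_castSucc, Function.iterate_succ_apply]

theorem homFace_homFace_of_pos {i j : ℕ} (hassoc : ∀ a b c : A, μ (α a) (μ b c) = μ (μ a b) (α c))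
    (hmult : ∀ a b : A, α (μ a b) = μ (α a) (α b)) (hj : 1 ≤ j) (hji : j < i) (hi : i ≤ m + 2)
    (a : Fin (m + 3) → A) :
    homFace μ α (m + 2) i (homFace μ α (m + 1) j f) a
      = homFace μ α (m + 2) j (homFace μ α (m + 1) (i - 1) f) a := by
  rw [homFace_of_ne (by omega) (by omega), homFace_of_ne (by omega) (by omega),
    homFace_of_ne (by omega) (by omega), homFace_of_ne (by omega) (by omega)]
  refine congrArg f (funext fun k => ?_)
  have hk := k.isLt
  simp only [Fin.val_castSucc, Fin.val_succ]
  split_ifs <;>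
    first | rfl | (exfalso; omega) | exact hmult _ _ | exact (hmult _ _).symm |
      exact hassoc _ _ _

theorem homFace_homFace_of_lt (hassoc : ∀ a b c : A, μ (α a) (μ b c) = μ (μ a b) (α c))
    (hmult : ∀ a b : A, α (μ a b) = μ (α a) (α b)) (hf : IsCompat α f) {i j : ℕ} (hji : j < i)
    (hi : i ≤ m + 3) (a : Fin (m + 3) → A) :
    homFace μ α (m + 2) i (homFace μ α (m + 1) j f) a
      = homFace μ α (m + 2) j (homFace μ α (m + 1) (i - 1) f) a := by
  obtain hi | rfl := Nat.lt_or_eq_of_le hi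
  · obtain rfl | hj := Nat.eq_zero_or_pos j
    · obtain rfl | hi2 : i = 1 ∨ 2 ≤ i := by omega
      · exact homFace_one_homFace_zero hassoc hmult hf a
      · exact homFace_homFace_zero hi2 (by omega) a
    · exact homFace_homFace_of_pos hassoc hmult hj hji (by omega) a
  · obtain rfl | ⟨hj, hj'⟩ | rfl : j = 0 ∨ (1 ≤ j ∧ j ≤ m + 1) ∨ j = m + 2 := by omega
    · exact homFace_last_homFace_zero hassoc a
    · exact homFace_last_homFace hj hj' a
    · exact homFace_last_homFace_last hassoc hmult hf a

end Faces

theorem homDelta_eq_sum_homFace {A : Type*} [AddCommGroup A] (μ : A → A → A) (α : A → A) (N : ℕ)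
    (f : (Fin N → A) → A) (a : Fin (N + 1) → A) :
    homDelta μ α N f a = ∑ i ∈ range (N + 2), ((-1 : ℤ) ^ i) • homFace μ α N i f a := by
  rw [sum_range_succ, sum_range_succ', homFace_zero, homFace_last, pow_zero, one_smul,
    ← Fin.sum_univ_eq_sum_range (fun i => ((-1 : ℤ) ^ (i + 1)) • homFace μ α N (i + 1) f a)]
  have hmid : ∀ i : Fin N, homFace μ α N (i + 1) f a
      = f fun j => if (j : ℕ) < i then α (a j.castSucc)
          else if (j : ℕ) = i then μ (a j.castSucc) (a j.succ) else α (a j.succ) := fun i => by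
    rw [homFace_of_ne (by omega) (by omega), Nat.add_sub_cancel]
  simp only [homDelta, hmid]
  abel

theorem homFace_sum_zsmul {R A : Type*} [CommSemiring R] [AddCommGroup A] [Module R A]
    (μ : A →ₗ[R] A →ₗ[R] A) (α : A → A) (N i : ℕ) {ι : Type*} (s : Finset ι) (c : ι → ℤ)
    (F : ι → (Fin N → A) → A) (a : Fin (N + 1) → A) :
    homFace (fun x y => μ x y) α N i (fun b => ∑ j ∈ s, c j • F j b) a
      = ∑ j ∈ s, c j • homFace (fun x y => μ x y) α N i (F j) a := by
  unfold homFace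
  split_ifs
  · simp only [map_sum, map_zsmul]
  · simp only [map_sum, map_zsmul, LinearMap.sum_apply, LinearMap.smul_apply]
  · rfl

theorem sum_range_sum_range_neg_one_pow_smul_eq_zero {M : Type*} [AddCommGroup M] (N : ℕ)
    (F : ℕ → ℕ → M) (hF : ∀ i j, j < i → i ≤ N + 1 → F i j = F j (i - 1)) :
    ∑ i ∈ range (N + 2), ∑ j ∈ range (N + 1), ((-1 : ℤ) ^ (i + j)) • F i j = 0 := by
  rw [← sum_product']
  refine sum_involution (fun p _ => if p.2 < p.1 then (p.2, p.1 - 1) else (p.2 + 1, p.1))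
    ?_ ?_ ?_ ?_
  · rintro ⟨i, j⟩ hp
    simp only [mem_product, mem_range] at hp
    by_cases h : j < i
    · have hsign : (-1 : ℤ) ^ (j + (i - 1)) = -(-1) ^ (i + j) := by
        rw [show i + j = j + (i - 1) + 1 by omega, pow_succ, mul_neg_one, neg_neg]
      simp only [h, if_pos, hF i j h (by omega), hsign, neg_smul, add_neg_cancel]
    · have hsign : (-1 : ℤ) ^ (j + 1 + i) = -(-1) ^ (i + j) := by
        rw [show j + 1 + i = i + j + 1 by omega, pow_succ, mul_neg_one]
      simp only [h, if_false, hF (j + 1) i (by omega) (by omega), Nat.add_sub_cancel, hsign,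
        neg_smul, add_neg_cancel]
  · rintro ⟨i, j⟩ _ _
    split_ifs <;> simp only [ne_eq, Prod.mk.injEq] <;> omega
  · rintro ⟨i, j⟩ hp
    simp only [mem_product, mem_range] at hp
    split_ifs <;> simp only [mem_product, mem_range] <;> omega
  · rintro ⟨i, j⟩ _
    by_cases h : j < i
    · simp only [h, if_pos, show ¬ i - 1 < j by omega, if_false, Prod.mk.injEq, and_true]
      omega
    · simp only [h, if_false, show i < j + 1 by omega, if_pos, Nat.add_sub_cancel]

theorem homDelta_squared_eq_zero_general
    {K : Type*} [Field K] {A : Type*} [AddCommGroup A] [Module K A]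
    (μ : A →ₗ[K] A →ₗ[K] A) (α : A →ₗ[K] A)
    (hassoc : ∀ a b c : A, μ (α a) (μ b c) = μ (μ a b) (α c))
    (hmult : ∀ a b : A, α (μ a b) = μ (α a) (α b))
    (n : ℕ) (f : MultilinearMap K (fun _ : Fin (n + 1) => A) A)
    (hf : IsCompat (⇑α) (⇑f)) :
    ∀ a : Fin (n + 3) → A,
      homDelta (fun x y => μ x y) (⇑α) (n + 2)
        (homDelta (fun x y => μ x y) (⇑α) (n + 1) (⇑f)) a = 0 := by
  intro a
  have hδ : homDelta (fun x y => μ x y) α (n + 1) f = fun b => ∑ j ∈ range (n + 3),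
      ((-1 : ℤ) ^ j) • homFace (fun x y => μ x y) α (n + 1) j f b :=
    funext (homDelta_eq_sum_homFace _ _ _ _)
  rw [homDelta_eq_sum_homFace, hδ]
  simp only [homFace_sum_zsmul, smul_sum, smul_smul, ← pow_add]
  exact sum_range_sum_range_neg_one_pow_smul_eq_zero (n + 2) _
    fun i j hji hi => homFace_homFace_of_lt hassoc hmult hf hji hi a

/-- For a multiplicative hom-associative algebra `(A, μ, α)`, the α-twisted Hochschild
coboundary satisfies `δ_α² = 0` on the cochain complex `C•_α(A,A)`. -/
theorem homDelta_squared_eq_zero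
    {K : Type*} [Field K] [CharZero K] {A : Type*} [AddCommGroup A] [Module K A]
    (μ : A →ₗ[K] A →ₗ[K] A) (α : A →ₗ[K] A)
    (hassoc : ∀ a b c : A, μ (α a) (μ b c) = μ (μ a b) (α c))
    (hmult : ∀ a b : A, α (μ a b) = μ (α a) (α b))
    (n : ℕ) (f : MultilinearMap K (fun _ : Fin (n + 1) => A) A)
    (hf : IsCompat (⇑α) (⇑f)) :
    ∀ a : Fin (n + 3) → A,
      homDelta (fun x y => μ x y) (⇑α) (n + 2)
        (homDelta (fun x y => μ x y) (⇑α) (n + 1) (⇑f)) a = 0 :=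
  homDelta_squared_eq_zero_general μ α hassoc hmult n f hf
end

section
/- For f ∈ V^α_m, g ∈ V^α_n, h ∈ V^α_p and 0 ≤ j ≤ i-1 ≤ m-1, one has (f ∘ᵢ g) ∘ⱼ h = (f ∘ⱼ h) ∘_{i+p} g, where ∘ᵢ is the α-twisted insertion operation. -/
/-
Both sides apply `f` to a tuple of `m + 1` entries, and the two tuples agree entrywise. Outside the
slots `j` and `i` each entry is a single input twisted by `α^[n]` and `α^[p]` in either order;
in slot `j` (resp. `i`) the compatibility of `h` (resp. `g`) with `α` moves the twist of the other
insertion inside `h` (resp. `g`).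
-/

lemma IsCompat.iterate {A : Type*} {α : A → A} {n : ℕ} {f : (Fin n → A) → A}
    (hf : IsCompat α f) (N : ℕ) (a : Fin n → A) :
    α^[N] (f a) = f fun i => α^[N] (a i) := by
  induction N generalizing a with
  | zero => rfl
  | succ N ih =>
    simp only [Function.iterate_succ_apply', ih]
    exact hf _

section InsertArgs

variable {A : Type*} {m n : ℕ}

def insertArgs (α : A → A) (i : Fin (m + 1)) (g : (Fin (n + 1) → A) → A)
    (a : Fin (m + n + 1) → A) : Fin (m + 1) → A :=
  fun k => if (k : ℕ) < (i : ℕ) then α^[n] (a ⟨(k : ℕ), by omega⟩)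
    else if (k : ℕ) = (i : ℕ) then g (fun l => a ⟨(i : ℕ) + (l : ℕ), by omega⟩)
    else α^[n] (a ⟨(k : ℕ) + n, by omega⟩)

variable {α : A → A} {i : ℕ} {hi : i < m + 1} {g : (Fin (n + 1) → A) → A}
  {a : Fin (m + n + 1) → A}

lemma circI_eq_apply_insertArgs (f : (Fin (m + 1) → A) → A) :
    circI α ⟨i, hi⟩ f g a = f (insertArgs α ⟨i, hi⟩ g a) := rfl

lemma insertArgs_of_lt {k : ℕ} {hk : k < m + 1} (hki : k < i) :
    insertArgs α ⟨i, hi⟩ g a ⟨k, hk⟩ = α^[n] (a ⟨k, by omega⟩) :=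
  if_pos hki

lemma insertArgs_self :
    insertArgs α ⟨i, hi⟩ g a ⟨i, hi⟩ = g fun l => a ⟨i + l, by omega⟩ :=
  (if_neg (lt_irrefl i)).trans (if_pos rfl)

lemma insertArgs_of_gt {k : ℕ} {hk : k < m + 1} (hik : i < k) :
    insertArgs α ⟨i, hi⟩ g a ⟨k, hk⟩ = α^[n] (a ⟨k + n, by omega⟩) :=
  (if_neg hik.not_gt).trans (if_neg hik.ne')

end InsertArgs

theorem circI_circI_of_lt {A : Type*} {α : A → A} {m n p : ℕ}
    (f : (Fin (m + 1) → A) → A) {g : (Fin (n + 1) → A) → A} {h : (Fin (p + 1) → A) → A}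
    (hg : IsCompat α g) (hh : IsCompat α h) {i j : ℕ} (hji : j < i) (hi : i < m + 1)
    (b : Fin (m + p + n + 1) → A) :
    circI α (⟨j, by omega⟩ : Fin (m + n + 1)) (circI α ⟨i, hi⟩ f g) h
        (reindex (by omega) b)
      = circI α (⟨i + p, by omega⟩ : Fin (m + p + 1)) (circI α ⟨j, by omega⟩ f h) g b := by
  simp only [circI_eq_apply_insertArgs]
  congr 1
  funext ⟨k, hk⟩
  have hαnp := Function.Commute.iterate_iterate_self α n p
  rcases lt_trichotomy k j with hkj | rfl | hjk
  · simp (disch := omega) only [insertArgs_of_lt]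
    exact hαnp _
  · simp (disch := omega) only [insertArgs_of_lt, insertArgs_self, hh.iterate]
    rfl
  rcases lt_trichotomy k i with hki | rfl | hik
  · simp (disch := omega) only [insertArgs_of_lt, insertArgs_of_gt]
    exact hαnp _
  · simp (disch := omega) only [insertArgs_of_gt, insertArgs_self, hg.iterate]
    simp only [reindex, Fin.cast_mk, Nat.add_right_comm]
  · simp (disch := omega) only [insertArgs_of_gt]
    simp only [reindex, Fin.cast_mk, Nat.add_right_comm]
    exact hαnp _

/-- Pre-Lie system identity, first case: for `f ∈ V^α_m`, `g ∈ V^α_n`, `h ∈ V^α_p`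
and `0 ≤ j ≤ i - 1 ≤ m - 1`, one has `(f ∘ᵢ g) ∘ⱼ h = (f ∘ⱼ h) ∘_{i+p} g`. -/
theorem circI_preLie_first
    {K : Type*} [Field K] {A : Type*} [AddCommGroup A] [Module K A]
    (α : A →ₗ[K] A) (m n p : ℕ)
    (f : MultilinearMap K (fun _ : Fin (m + 1) => A) A)
    (g : MultilinearMap K (fun _ : Fin (n + 1) => A) A)
    (h : MultilinearMap K (fun _ : Fin (p + 1) => A) A)
    (hg : IsCompat (⇑α) (⇑g)) (hh : IsCompat (⇑α) (⇑h))
    (i j : ℕ) (hji : j < i) (him : i ≤ m) :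
    ∀ a : Fin (m + n + p + 1) → A,
      circI (⇑α) (⟨j, by omega⟩ : Fin (m + n + 1))
          (circI (⇑α) (⟨i, by omega⟩ : Fin (m + 1)) (⇑f) (⇑g)) (⇑h) a
      = circI (⇑α) (⟨i + p, by omega⟩ : Fin (m + p + 1))
          (circI (⇑α) (⟨j, by omega⟩ : Fin (m + 1)) (⇑f) (⇑h)) (⇑g)
          (reindex (by omega) a) :=
  fun a => circI_circI_of_lt f hg hh hji (Nat.lt_succ_of_le him) (reindex (by omega) a)
end

section
/- For f ∈ V^α_m, g ∈ V^α_n, h ∈ V^α_p and i ≤ j ≤ n+i, one has (f ∘ᵢ g) ∘ⱼ h = f ∘ᵢ (g ∘_{j-i} h), where ∘ᵢ is the α-twisted insertion operation. -/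
/-
When `j` falls inside the block occupied by `g` in `f ∘ᵢ g`, inserting `h` at `j` only
touches the arguments of `g`. So both sides feed `f` the same tuple: outside the block of
`g` each argument is hit by `αⁿ` and then `αᵖ` (or by `α^{n+p}` at once), and inside it `g`
receives the arguments of `g ∘_{j-i} h`, up to a shift of indices by `i`.
-/

section Insertion

variable {A : Type*} (α : A → A)

def circIArgs {m n : ℕ} (i : Fin (m + 1)) (g : (Fin (n + 1) → A) → A)
    (a : Fin (m + n + 1) → A) : Fin (m + 1) → A := fun k =>
  if (k : ℕ) < (i : ℕ) then α^[n] (a ⟨(k : ℕ), by omega⟩)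
  else if (k : ℕ) = (i : ℕ) then g (fun l => a ⟨(i : ℕ) + (l : ℕ), by omega⟩)
  else α^[n] (a ⟨(k : ℕ) + n, by omega⟩)

variable {m n : ℕ} (i : Fin (m + 1)) (g : (Fin (n + 1) → A) → A) (a : Fin (m + n + 1) → A)

theorem circI_eq_apply_circIArgs (f : (Fin (m + 1) → A) → A) :
    circI α i f g a = f (circIArgs α i g a) :=
  rfl

theorem circIArgs_of_lt {k : Fin (m + 1)} (hk : (k : ℕ) < i) :
    circIArgs α i g a k = α^[n] (a ⟨k, by omega⟩) :=
  if_pos hk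

theorem circIArgs_of_eq {k : Fin (m + 1)} (hk : (k : ℕ) = i) :
    circIArgs α i g a k = g fun l => a ⟨(i : ℕ) + (l : ℕ), by omega⟩ := by
  rw [circIArgs, if_neg hk.not_lt, if_pos hk]

theorem circIArgs_of_gt {k : Fin (m + 1)} (hk : (i : ℕ) < k) :
    circIArgs α i g a k = α^[n] (a ⟨(k : ℕ) + n, by omega⟩) := by
  rw [circIArgs, if_neg (by omega), if_neg (by omega)]

theorem circIArgs_shift {M p : ℕ} (s j : ℕ) (hsj : s ≤ j) (hjn : j ≤ n + s) (hsM : s + n ≤ M)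
    (h : (Fin (p + 1) → A) → A) (b : Fin (M + p + 1) → A) (l : Fin (n + 1)) :
    circIArgs α (⟨j, by omega⟩ : Fin (M + 1)) h b ⟨s + l, by omega⟩
      = circIArgs α (⟨j - s, by omega⟩ : Fin (n + 1)) h
          (fun r : Fin (n + p + 1) => b ⟨s + r, by omega⟩) l := by
  rcases lt_trichotomy (s + l) j with hl | hl | hl
  · rw [circIArgs_of_lt _ _ _ _ hl, circIArgs_of_lt _ _ _ _ (by simp; omega)]
  · rw [circIArgs_of_eq _ _ _ _ hl, circIArgs_of_eq _ _ _ _ (by simp; omega)]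
    congr 1
    funext r
    exact congrArg b (Fin.ext (by simp; omega))
  · rw [circIArgs_of_gt _ _ _ _ hl, circIArgs_of_gt _ _ _ _ (by simp; omega)]
    exact congrArg _ (congrArg b (Fin.ext (by simp; omega)))

theorem circI_circI_of_le {p : ℕ} (f : (Fin (m + 1) → A) → A) (h : (Fin (p + 1) → A) → A)
    (j : Fin (m + n + 1)) (hij : (i : ℕ) ≤ j) (hjn : (j : ℕ) ≤ n + i)
    (b : Fin (m + n + p + 1) → A) :
    circI α j (circI α i f g) h b
      = circI α i f (circI α ⟨j - i, by omega⟩ g h)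
          (reindex (congrArg (· + 1) (Nat.add_assoc m n p)).symm b) := by
  simp only [circI_eq_apply_circIArgs]
  congr 1
  funext k
  rcases lt_trichotomy (k : ℕ) i with hk | hk | hk
  · rw [circIArgs_of_lt _ _ _ _ hk, circIArgs_of_lt _ _ _ _ (by simp; omega),
      circIArgs_of_lt _ _ _ _ hk, ← Function.iterate_add_apply]
    rfl
  · rw [circIArgs_of_eq _ _ _ _ hk, circIArgs_of_eq _ _ _ _ hk]
    congr 1
    funext l
    exact circIArgs_shift α i j hij hjn (by omega) h b l
  · rw [circIArgs_of_gt _ _ _ _ hk, circIArgs_of_gt _ _ _ _ (by simp; omega),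
      circIArgs_of_gt _ _ _ _ hk, ← Function.iterate_add_apply]
    exact congrArg _ (congrArg b (Fin.ext (by simp; omega)))

end Insertion

/-- Pre-Lie system identity, second case: for `f ∈ V^α_m`, `g ∈ V^α_n`, `h ∈ V^α_p`
and `i ≤ j ≤ n + i`, one has `(f ∘ᵢ g) ∘ⱼ h = f ∘ᵢ (g ∘_{j-i} h)`. -/
theorem circI_preLie_second
    {K : Type*} [Field K] {A : Type*} [AddCommGroup A] [Module K A]
    (α : A →ₗ[K] A) (m n p : ℕ)
    (f : MultilinearMap K (fun _ : Fin (m + 1) => A) A)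
    (g : MultilinearMap K (fun _ : Fin (n + 1) => A) A)
    (h : MultilinearMap K (fun _ : Fin (p + 1) => A) A)
    (i j : ℕ) (hij : i ≤ j) (hjn : j ≤ n + i) (him : i ≤ m) :
    ∀ a : Fin (m + n + p + 1) → A,
      circI (⇑α) (⟨j, by omega⟩ : Fin (m + n + 1))
          (circI (⇑α) (⟨i, by omega⟩ : Fin (m + 1)) (⇑f) (⇑g)) (⇑h) a
      = circI (⇑α) (⟨i, by omega⟩ : Fin (m + 1)) (⇑f)
          (circI (⇑α) (⟨j - i, by omega⟩ : Fin (n + 1)) (⇑g) (⇑h))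
          (reindex (by omega) a) := by
  intro a
  exact circI_circI_of_le α ⟨i, by omega⟩ g f h ⟨j, by omega⟩ hij hjn a
end

section
/- In a multiplicative hom-associative algebra (A, μ, α), for any f ∈ Cⁿ_α(A,A), the coboundary is expressed via the Gerstenhaber bracket as δ_α f = -[f, μ]_α = (-1)^{n-1} [μ, f]_α. -/
/-! Both sides expand into the face terms of `δ_α f`: the insertions `f ∘ᵢ μ` are exactly the inner
faces `f(α a₀, …, μ(aᵢ, aᵢ₊₁), …, α aₙ₊₁)`, while `μ ∘₀ f` and `μ ∘₁ f` are the two outer faces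
`μ(f(a₀, …, aₙ), αⁿ aₙ₊₁)` and `μ(αⁿ a₀, f(a₁, …, aₙ₊₁))`. What remains is a comparison of signs,
using `(-1)ⁿ (-1)ⁿ = 1`. -/

section MulCochain

variable {A : Type*} (μ : A → A → A) (α : A → A)

def mulFace {n : ℕ} (i : Fin (n + 1)) (a : Fin (n + 2) → A) : Fin (n + 1) → A := fun j =>
  if (j : ℕ) < (i : ℕ) then α (a j.castSucc)
  else if (j : ℕ) = (i : ℕ) then μ (a j.castSucc) (a j.succ)
  else α (a j.succ)

theorem reindex_reindex_self {p q : ℕ} (h : q = p) (h' : p = q) (a : Fin p → A) :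
    reindex h' (reindex h a) = a :=
  rfl

theorem circI_mul_right {n : ℕ} (i : Fin (n + 1)) (f : (Fin (n + 1) → A) → A)
    (a : Fin (n + 2) → A) :
    circI α i f (fun v : Fin 2 → A => μ (v 0) (v 1)) a = f (mulFace μ α i a) := by
  simp only [circI, Function.iterate_one]
  congr 1
  funext k
  simp only [mulFace]
  split_ifs with hlt heq
  · rfl
  · congr 1 <;> congr 1 <;> ext <;> simp [heq]
  · rfl

variable [AddCommGroup A]

theorem neg_one_pow_smul_neg_one_pow_smul (n : ℕ) (x : A) :
    ((-1 : ℤ) ^ n) • ((-1 : ℤ) ^ n) • x = x := by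
  rw [smul_smul, ← mul_pow, neg_one_mul, neg_neg, one_pow, one_smul]

theorem homDelta_succ (n : ℕ) (f : (Fin (n + 1) → A) → A) (a : Fin (n + 2) → A) :
    homDelta μ α (n + 1) f a
      = μ (α^[n] (a 0)) (f fun i => a i.succ)
        - ∑ i : Fin (n + 1), ((-1 : ℤ) ^ (i : ℕ)) • f (mulFace μ α i a)
        + ((-1 : ℤ) ^ n) • μ (f fun i => a i.castSucc) (α^[n] (a (Fin.last (n + 1)))) := by
  simp only [homDelta, Nat.add_sub_cancel, sub_eq_add_neg, ← Finset.sum_neg_distrib, pow_succ,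
    mul_neg_one, neg_smul, neg_neg]
  rfl

theorem vcirc_mul_right (n : ℕ) (f : (Fin (n + 1) → A) → A) (a : Fin (n + 2) → A) :
    vcirc α f (fun v : Fin 2 → A => μ (v 0) (v 1)) a
      = ∑ i : Fin (n + 1), ((-1 : ℤ) ^ (i : ℕ)) • f (mulFace μ α i a) := by
  simp only [vcirc, one_mul, circI_mul_right]

theorem vcirc_mul_left (n : ℕ) (f : (Fin (n + 1) → A) → A) (h : 1 + n + 1 = n + 2)
    (a : Fin (n + 2) → A) :
    vcirc α (fun v : Fin 2 → A => μ (v 0) (v 1)) f (reindex h a)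
      = μ (f fun i => a i.castSucc) (α^[n] (a (Fin.last (n + 1))))
        + ((-1 : ℤ) ^ n) • μ (α^[n] (a 0)) (f fun i => a i.succ) := by
  simp only [vcirc, circI, reindex]
  rw [Fin.sum_univ_two]
  simp only [Fin.isValue, Fin.coe_ofNat_eq_mod, Nat.zero_mod, Nat.mod_succ, mul_zero, mul_one,
    pow_zero, one_smul, lt_self_iff_false, not_lt_zero, one_ne_zero, Order.lt_one_iff,
    ↓reduceIte, zero_add, Fin.cast_mk, Fin.zero_eta, Fin.cast_zero]
  congr 2
  · congr 2
    ext
    simp only [Fin.val_last]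
    omega
  · congr 2
    funext l
    congr 1
    ext
    simp only [Fin.val_succ]
    omega

end MulCochain

/-- In a multiplicative hom-associative algebra `(A, μ, α)`, for `f ∈ Cⁿ_α(A,A)`
(here of degree `n + 1`), the coboundary is expressed via the Gerstenhaber bracket:
`δ_α f = -[f, μ]_α = (-1)^{(n+1)-1} [μ, f]_α`. -/
theorem homDelta_eq_bracket_with_mul
    {K : Type*} [Field K] {A : Type*} [AddCommGroup A] [Module K A]
    (μ : A →ₗ[K] A →ₗ[K] A) (α : A →ₗ[K] A)
    (n : ℕ) (f : MultilinearMap K (fun _ : Fin (n + 1) => A) A) :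
    ∀ a : Fin (n + 2) → A,
      homDelta (fun x y => μ x y) (⇑α) (n + 1) (⇑f) a
        = - vbracket (⇑α) (⇑f) (fun v : Fin 2 → A => μ (v 0) (v 1)) a ∧
      homDelta (fun x y => μ x y) (⇑α) (n + 1) (⇑f) a
        = ((-1 : ℤ) ^ n) •
            vbracket (⇑α) (fun v : Fin 2 → A => μ (v 0) (v 1)) (⇑f)
              (reindex (by omega) a) := by
  intro a
  simp only [vbracket, reindex_reindex_self, one_mul, mul_one]
  rw [homDelta_succ, vcirc_mul_right (fun x y => μ x y), vcirc_mul_left (fun x y => μ x y)]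
  constructor
  · rw [smul_add, neg_one_pow_smul_neg_one_pow_smul]
    abel
  · rw [smul_sub, smul_add, neg_one_pow_smul_neg_one_pow_smul,
      neg_one_pow_smul_neg_one_pow_smul]
    abel
end

section
/- In a multiplicative hom-associative algebra (A, μ, α), the cup product (f ∪_α g)(a₁,…,a_{m+n}) = μ(α^{n-1} f(a₁,…,a_m), α^{m-1} g(a_{m+1},…,a_{m+n})) maps C^m_α(A,A) × Cⁿ_α(A,A) into C^{m+n}_α(A,A) and is associative: f ∪_α (g ∪_α h) = (f ∪_α g) ∪_α h. -/
/-! Multiplicativity lets every power of `α` pass through `μ`, so both bracketings of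
`f ∪ g ∪ h` at `(F, G, H) = (f(…), g(…), h(…))` become
`μ (α (α^[n+p] F)) (μ (α^[m+p] G) (α^[m+n] H))` and
`μ (μ (α^[n+p] F) (α^[m+p] G)) (α (α^[m+n] H))`, which hom-associativity identifies.
Compatibility with `α` follows by pushing `α` through `μ` and its powers onto `f` and `g`;
multilinearity holds because `f ∪ g` is `μ` applied to the external product of `α^[n] ∘ f` and `α^[m] ∘ g`. -/

open Function

section cupProd

variable {A : Type*} (μ : A → A → A) (α : A → A)

theorem isCompat_cupProd (hmult : Semiconj₂ α μ μ) {m n : ℕ}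
    {f : (Fin (m + 1) → A) → A} {g : (Fin (n + 1) → A) → A}
    (hf : IsCompat α f) (hg : IsCompat α g) : IsCompat α (cupProd μ α f g) := by
  intro a
  simp only [cupProd, hmult.eq, ← iterate_succ_apply' α, iterate_succ_apply]
  rw [hf, hg]

theorem cupProd_assoc (hassoc : ∀ a b c : A, μ (α a) (μ b c) = μ (μ a b) (α c))
    (hmult : Semiconj₂ α μ μ) {m n p : ℕ} (f : (Fin (m + 1) → A) → A)
    (g : (Fin (n + 1) → A) → A) (h : (Fin (p + 1) → A) → A)
    (a : Fin (m + (n + p + 1) + 2) → A) :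
    cupProd μ α f (cupProd μ α g h) a
      = cupProd μ α (cupProd μ α f g) h (reindex (by omega) a) := by
  have hidx : ∀ i : ℕ, m + 1 + (n + 1 + i) = m + n + 1 + 1 + i := by omega
  simp only [cupProd, reindex, Fin.cast_mk, hidx]
  generalize f _ = x, g _ = y, h _ = z
  calc μ (α^[n + p + 1] x) (α^[m] (μ (α^[p] y) (α^[n] z)))
      = μ (α (α^[n + p] x)) (μ (α^[m + p] y) (α^[m + n] z)) := by
        rw [(hmult.iterate m).eq, ← iterate_add_apply, ← iterate_add_apply,
          ← iterate_succ_apply' α (n + p)]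
    _ = μ (μ (α^[n + p] x) (α^[m + p] y)) (α (α^[m + n] z)) := hassoc _ _ _
    _ = μ (α^[p] (μ (α^[n] x) (α^[m] y))) (α^[m + n + 1] z) := by
        rw [(hmult.iterate p).eq, ← iterate_add_apply, ← iterate_add_apply,
          ← iterate_succ_apply' α (m + n), Nat.add_comm p n, Nat.add_comm p m]

end cupProd

namespace MultilinearMap

variable {R A : Type*} [CommSemiring R] [AddCommMonoid A] [Module R A] {m n : ℕ}

def cupProd (μ : A →ₗ[R] A →ₗ[R] A) (α : A →ₗ[R] A)
    (f : MultilinearMap R (fun _ : Fin (m + 1) => A) A)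
    (g : MultilinearMap R (fun _ : Fin (n + 1) => A) A) :
    MultilinearMap R (fun _ : Fin (m + n + 2) => A) A :=
  ((TensorProduct.lift μ).compMultilinearMap
      (((α ^ n).compMultilinearMap f).domCoprod ((α ^ m).compMultilinearMap g))).domDomCongr
    (finSumFinEquiv.trans (finCongr (by omega)))

theorem coe_cupProd (μ : A →ₗ[R] A →ₗ[R] A) (α : A →ₗ[R] A)
    (f : MultilinearMap R (fun _ : Fin (m + 1) => A) A)
    (g : MultilinearMap R (fun _ : Fin (n + 1) => A) A) :
    ⇑(cupProd μ α f g) = _root_.cupProd (fun x y => μ x y) α f g := by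
  funext a
  simp only [cupProd, domDomCongr_apply, LinearMap.compMultilinearMap_apply, domCoprod_apply,
    TensorProduct.lift.tmul, _root_.cupProd, Module.End.pow_apply]
  congr 2

end MultilinearMap

/-- In a multiplicative hom-associative algebra, the cup product maps
`C^{m+1}_α × C^{n+1}_α` into `C^{m+n+2}_α` and is associative. -/
theorem cupProd_mem_and_assoc
    {K : Type*} [Field K] {A : Type*} [AddCommGroup A] [Module K A]
    (μ : A →ₗ[K] A →ₗ[K] A) (α : A →ₗ[K] A)
    (hassoc : ∀ a b c : A, μ (α a) (μ b c) = μ (μ a b) (α c))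
    (hmult : ∀ a b : A, α (μ a b) = μ (α a) (α b))
    (m n p : ℕ)
    (f : MultilinearMap K (fun _ : Fin (m + 1) => A) A)
    (g : MultilinearMap K (fun _ : Fin (n + 1) => A) A)
    (h : MultilinearMap K (fun _ : Fin (p + 1) => A) A)
    (hf : IsCompat (⇑α) (⇑f)) (hg : IsCompat (⇑α) (⇑g)) :
    (∃ M : MultilinearMap K (fun _ : Fin (m + n + 2) => A) A,
        ⇑M = cupProd (fun x y => μ x y) (⇑α) (⇑f) (⇑g)) ∧
    IsCompat (⇑α) (cupProd (fun x y => μ x y) (⇑α) (⇑f) (⇑g)) ∧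
    ∀ a : Fin (m + n + p + 3) → A,
      cupProd (fun x y => μ x y) (⇑α) (⇑f)
          (cupProd (fun x y => μ x y) (⇑α) (⇑g) (⇑h)) (reindex (by omega) a)
        = cupProd (fun x y => μ x y) (⇑α)
            (cupProd (fun x y => μ x y) (⇑α) (⇑f) (⇑g)) (⇑h)
            (reindex (by omega) a) := by
  exact ⟨⟨f.cupProd μ α g, f.coe_cupProd μ α g⟩, isCompat_cupProd _ _ hmult hf hg,
    fun _ => cupProd_assoc _ _ hassoc hmult f g h _⟩
end

section
/- In a multiplicative hom-associative algebra (A, μ, α), the coboundary δ_α is a graded derivation of the cup product: δ_α(f ∪_α g) = (δ_α f) ∪_α g + (-1)^m f ∪_α (δ_α g) for f ∈ C^m_α(A,A), g ∈ Cⁿ_α(A,A). Consequently, ∪_α induces an associative product on H•_α(A,A). -/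
/-!
Tuples `Fin k → A` are treated as initial segments of sequences `ℕ → A`, so that all faces of
`δ_α` become one operation `twistedFace` on sequences and no `Fin` casts are needed.

In `δ_α(f ∪_α g)` the faces at positions `i ≤ m` only touch the arguments of `f` and are the
inner terms of `(δ_α f) ∪_α g`; the faces at positions `i > m` only touch those of `g` and are
the inner terms of `f ∪_α (δ_α g)`, because `α`-compatibility of the untouched cochain absorbs
the extra `α` on its arguments. The two outer terms of `δ_α(f ∪_α g)` match the corresponding
outer terms on the right by hom-associativity, once powers of `α` are pushed through `μ`
(multiplicativity); by the same move the last term of `(δ_α f) ∪_α g` cancels the first term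
of `(-1)^{m+1} f ∪_α (δ_α g)`.
-/

open Finset

lemma Fin.exists_eq_seq {A : Type*} [Zero A] {N : ℕ} (a : Fin N → A) :
    ∃ b : ℕ → A, a = fun i : Fin N => b i :=
  ⟨fun v => if h : v < N then a ⟨v, h⟩ else 0, funext fun i => by simp⟩

section Faces

variable {A : Type*} (μ : A → A → A) (α : A → A)

def twistedFace (i : ℕ) (b : ℕ → A) : ℕ → A := fun j =>
  if j < i then α (b j) else if j = i then μ (b j) (b (j + 1)) else α (b (j + 1))

variable {μ α}

lemma twistedFace_of_lt {i j : ℕ} (b : ℕ → A) (h : j < i) :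
    twistedFace μ α i b j = α (b j) :=
  if_pos h

lemma twistedFace_of_gt {i j : ℕ} (b : ℕ → A) (h : i < j) :
    twistedFace μ α i b j = α (b (j + 1)) := by
  simp [twistedFace, h.not_gt, h.ne']

lemma twistedFace_add (s i j : ℕ) (b : ℕ → A) :
    twistedFace μ α (s + i) b (s + j) = twistedFace μ α i (fun t => b (s + t)) j := by
  simp only [twistedFace, Nat.add_lt_add_iff_left, Nat.add_left_cancel_iff, add_assoc]

variable {m n : ℕ} {f : (Fin (m + 1) → A) → A} {g : (Fin (n + 1) → A) → A}

lemma cupProd_apply_seq (b : ℕ → A) :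
    cupProd μ α f g (fun i => b i) =
      μ (α^[n] (f fun i => b i)) (α^[m] (g fun i => b (m + 1 + i))) :=
  rfl

lemma cupProd_twistedFace_of_le (hg : IsCompat α g) {i : ℕ} (hi : i ≤ m) (b : ℕ → A) :
    cupProd μ α f g (fun j => twistedFace μ α i b j) =
      μ (α^[n] (f fun j => twistedFace μ α i b j))
        (α^[m + 1] (g fun l => b (m + 1 + l + 1))) := by
  rw [cupProd_apply_seq, Function.iterate_succ_apply, hg]
  congr; funext l
  exact twistedFace_of_gt b (by omega)

lemma cupProd_twistedFace_add (hf : IsCompat α f) (k : ℕ) (b : ℕ → A) :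
    cupProd μ α f g (fun j => twistedFace μ α (m + 1 + k) b j) =
      μ (α^[n + 1] (f fun j => b j))
        (α^[m] (g fun l => twistedFace μ α k (fun t => b (m + 1 + t)) l)) := by
  rw [cupProd_apply_seq, Function.iterate_succ_apply, hf]
  congr <;> funext l
  · exact twistedFace_of_lt b (by omega)
  · exact twistedFace_add _ _ _ b

end Faces

section HomAssociative

variable {A : Type*}

structure IsMultHomAssoc (μ : A → A → A) (α : A → A) : Prop where
  hom_assoc : ∀ a b c, μ (α a) (μ b c) = μ (μ a b) (α c)
  map_mul : ∀ a b, α (μ a b) = μ (α a) (α b)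

namespace IsMultHomAssoc

variable {μ : A → A → A} {α : A → A} (h : IsMultHomAssoc μ α)
include h

lemma iterate_map_mul (k : ℕ) (x y : A) : α^[k] (μ x y) = μ (α^[k] x) (α^[k] y) :=
  Function.Semiconj₂.iterate h.map_mul k x y

lemma iterate_assoc_first (m n : ℕ) (x y z : A) :
    μ (α^[n] (μ (α^[m] x) y)) (α^[m + 1] z) =
      μ (α^[m + n + 1] x) (μ (α^[n] y) (α^[m] z)) := by
  rw [h.iterate_map_mul, ← Function.iterate_add_apply, Function.iterate_succ_apply',
    ← h.hom_assoc, ← Function.iterate_succ_apply' α (n + m), Nat.add_comm n m]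

lemma iterate_assoc_last (m n : ℕ) (x y z : A) :
    μ (α^[n + 1] x) (α^[m] (μ y (α^[n] z))) =
      μ (μ (α^[n] x) (α^[m] y)) (α^[m + n + 1] z) := by
  rw [h.iterate_map_mul, ← Function.iterate_add_apply, Function.iterate_succ_apply',
    h.hom_assoc, ← Function.iterate_succ_apply' α (m + n)]

lemma iterate_assoc_middle (m n : ℕ) (x y z : A) :
    μ (α^[n] (μ x (α^[m] y))) (α^[m + 1] z) =
      μ (α^[n + 1] x) (α^[m] (μ (α^[n] y) z)) := by
  rw [h.iterate_map_mul, h.iterate_map_mul, ← Function.iterate_add_apply,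
    ← Function.iterate_add_apply, Function.iterate_succ_apply', Function.iterate_succ_apply',
    h.hom_assoc, Nat.add_comm n m]

end IsMultHomAssoc

end HomAssociative

section Cochains

variable {A : Type*} [AddCommGroup A] {μ : A → A → A} {α : A → A}

lemma homDelta_apply_seq (n : ℕ) (f : (Fin n → A) → A) (b : ℕ → A) :
    homDelta μ α n f (fun i => b i) =
      μ (α^[n - 1] (b 0)) (f fun i => b (i + 1))
        + ∑ i ∈ range n, (-1 : ℤ) ^ (i + 1) • f (fun j => twistedFace μ α i b j)
        + (-1 : ℤ) ^ (n + 1) • μ (f fun i => b i) (α^[n - 1] (b n)) := by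
  rw [← Fin.sum_univ_eq_sum_range
    (fun i => (-1 : ℤ) ^ (i + 1) • f (fun j => twistedFace μ α i b j))]
  rfl

variable {m n : ℕ} {f : (Fin (m + 1) → A) → A} {g : (Fin (n + 1) → A) → A}

lemma homDelta_cupProd_expand (hf : IsCompat α f) (hg : IsCompat α g) (b : ℕ → A) :
    homDelta μ α (m + n + 2) (cupProd μ α f g) (fun i => b i) =
      μ (α^[m + n + 1] (b 0))
          (μ (α^[n] (f fun i => b (i + 1))) (α^[m] (g fun l => b (m + 1 + l + 1))))
      + ∑ i ∈ range (m + 1), (-1 : ℤ) ^ (i + 1) •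
          μ (α^[n] (f fun j => twistedFace μ α i b j))
            (α^[m + 1] (g fun l => b (m + 1 + l + 1)))
      + (-1 : ℤ) ^ (m + 1) • ∑ k ∈ range (n + 1), (-1 : ℤ) ^ (k + 1) •
          μ (α^[n + 1] (f fun i => b i))
            (α^[m] (g fun l => twistedFace μ α k (fun t => b (m + 1 + t)) l))
      + (-1 : ℤ) ^ (m + 1) • (-1 : ℤ) ^ (n + 2) •
          μ (μ (α^[n] (f fun i => b i)) (α^[m] (g fun l => b (m + 1 + l))))
            (α^[m + n + 1] (b (m + n + 2))) := by
  have first : cupProd μ α f g (fun i => b (i + 1)) =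
      μ (α^[n] (f fun i => b (i + 1))) (α^[m] (g fun l => b (m + 1 + l + 1))) := rfl
  have left : ∀ i ∈ range (m + 1),
      (-1 : ℤ) ^ (i + 1) • cupProd μ α f g (fun j => twistedFace μ α i b j)
        = (-1 : ℤ) ^ (i + 1) • μ (α^[n] (f fun j => twistedFace μ α i b j))
            (α^[m + 1] (g fun l => b (m + 1 + l + 1))) := fun i hi => by
    rw [cupProd_twistedFace_of_le hg (Nat.lt_succ_iff.mp (mem_range.mp hi))]
  have right : ∀ k ∈ range (n + 1),
      (-1 : ℤ) ^ (m + 1 + k + 1) •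
          cupProd μ α f g (fun j => twistedFace μ α (m + 1 + k) b j)
        = (-1 : ℤ) ^ (m + 1) • (-1 : ℤ) ^ (k + 1) • μ (α^[n + 1] (f fun i => b i))
            (α^[m] (g fun l => twistedFace μ α k (fun t => b (m + 1 + t)) l)) := fun k _ => by
    rw [cupProd_twistedFace_add hf, smul_smul, ← pow_add, add_assoc (m + 1)]
  rw [homDelta_apply_seq, show range (m + n + 2) = range (m + 1 + (n + 1)) by ring_nf,
    sum_range_add, sum_congr rfl left, sum_congr rfl right, ← smul_sum, first, cupProd_apply_seq,
    show m + n + 2 + 1 = m + 1 + (n + 2) by omega, pow_add (-1 : ℤ) (m + 1), mul_smul,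
    add_assoc _ (∑ _ ∈ _, _)]
  rfl

end Cochains

section Bilinear

variable {R A : Type*} [CommSemiring R] [AddCommGroup A] [Module R A]
  {μ : A →ₗ[R] A →ₗ[R] A} {α : A →ₗ[R] A} {m n : ℕ}
  {f : (Fin (m + 1) → A) → A} {g : (Fin (n + 1) → A) → A}

lemma cupProd_homDelta_left_expand (b : ℕ → A) :
    cupProd (μ · ·) α (homDelta (μ · ·) α (m + 1) f) g (fun i => b i) =
      μ (α^[n] (μ (α^[m] (b 0)) (f fun i => b (i + 1))))
          (α^[m + 1] (g fun l => b (m + 1 + l + 1)))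
      + ∑ i ∈ range (m + 1), (-1 : ℤ) ^ (i + 1) •
          μ (α^[n] (f fun j => twistedFace (μ · ·) α i b j))
            (α^[m + 1] (g fun l => b (m + 1 + l + 1)))
      + (-1 : ℤ) ^ (m + 2) • μ (α^[n] (μ (f fun i => b i) (α^[m] (b (m + 1)))))
          (α^[m + 1] (g fun l => b (m + 1 + l + 1))) := by
  rw [cupProd_apply_seq, homDelta_apply_seq]
  simp only [← Module.End.coe_pow, map_add, map_sum, map_zsmul, LinearMap.add_apply,
    LinearMap.sum_apply, LinearMap.smul_apply]
  simp only [Module.End.coe_pow, Nat.add_right_comm (m + 1) 1]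
  rfl

lemma cupProd_homDelta_right_expand (b : ℕ → A) :
    cupProd (μ · ·) α f (homDelta (μ · ·) α (n + 1) g) (fun i => b i) =
      μ (α^[n + 1] (f fun i => b i))
          (α^[m] (μ (α^[n] (b (m + 1))) (g fun l => b (m + 1 + l + 1))))
      + ∑ k ∈ range (n + 1), (-1 : ℤ) ^ (k + 1) • μ (α^[n + 1] (f fun i => b i))
          (α^[m] (g fun l => twistedFace (μ · ·) α k (fun t => b (m + 1 + t)) l))
      + (-1 : ℤ) ^ (n + 2) • μ (α^[n + 1] (f fun i => b i))
          (α^[m] (μ (g fun l => b (m + 1 + l)) (α^[n] (b (m + 1 + (n + 1)))))) := by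
  rw [cupProd_apply_seq, homDelta_apply_seq (b := fun t => b (m + 1 + t))]
  simp only [← Module.End.coe_pow, map_add, map_sum, map_zsmul]
  simp only [Module.End.coe_pow]
  rfl

variable (h : IsMultHomAssoc (μ · ·) α) (hf : IsCompat α f) (hg : IsCompat α g)
include h hf hg

lemma homDelta_cupProd_apply_seq (b : ℕ → A) :
    homDelta (μ · ·) α (m + n + 2) (cupProd (μ · ·) α f g) (fun i => b i) =
      cupProd (μ · ·) α (homDelta (μ · ·) α (m + 1) f) g (fun i => b i)
        + (-1 : ℤ) ^ (m + 1) •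
            cupProd (μ · ·) α f (homDelta (μ · ·) α (n + 1) g) (fun i => b i) := by
  rw [homDelta_cupProd_expand hf hg, cupProd_homDelta_left_expand,
    cupProd_homDelta_right_expand, h.iterate_assoc_first, h.iterate_assoc_middle,
    h.iterate_assoc_last, show m + 1 + (n + 1) = m + n + 2 by omega]
  module

theorem homDelta_cupProd_apply (a : Fin (m + n + 3) → A) :
    homDelta (μ · ·) α (m + n + 2) (cupProd (μ · ·) α f g) a =
      cupProd (μ · ·) α (homDelta (μ · ·) α (m + 1) f) g (reindex (by ring) a)
        + (-1 : ℤ) ^ (m + 1) •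
            cupProd (μ · ·) α f (homDelta (μ · ·) α (n + 1) g) a := by
  obtain ⟨b, rfl⟩ := Fin.exists_eq_seq a
  exact homDelta_cupProd_apply_seq h hf hg b

end Bilinear

/-- In a multiplicative hom-associative algebra, `δ_α` is a graded derivation of the
cup product: `δ_α(f ∪_α g) = (δ_α f) ∪_α g + (-1)^{m+1} f ∪_α (δ_α g)` for
`f ∈ C^{m+1}_α`, `g ∈ C^{n+1}_α`; consequently `∪_α` induces an associative product on
cohomology (in particular the cup product of cocycles is a cocycle). -/
theorem homDelta_cupProd_derivation
    {K : Type*} [Field K] {A : Type*} [AddCommGroup A] [Module K A]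
    (μ : A →ₗ[K] A →ₗ[K] A) (α : A →ₗ[K] A)
    (hassoc : ∀ a b c : A, μ (α a) (μ b c) = μ (μ a b) (α c))
    (hmult : ∀ a b : A, α (μ a b) = μ (α a) (α b))
    (m n : ℕ)
    (f : MultilinearMap K (fun _ : Fin (m + 1) => A) A)
    (g : MultilinearMap K (fun _ : Fin (n + 1) => A) A)
    (hf : IsCompat (⇑α) (⇑f)) (hg : IsCompat (⇑α) (⇑g)) :
    (∀ a : Fin (m + n + 3) → A,
      homDelta (fun x y => μ x y) (⇑α) (m + n + 2)
          (cupProd (fun x y => μ x y) (⇑α) (⇑f) (⇑g)) a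
        = cupProd (fun x y => μ x y) (⇑α)
            (homDelta (fun x y => μ x y) (⇑α) (m + 1) (⇑f)) (⇑g)
            (reindex (by omega) a)
          + ((-1 : ℤ) ^ (m + 1)) •
              cupProd (fun x y => μ x y) (⇑α) (⇑f)
                (homDelta (fun x y => μ x y) (⇑α) (n + 1) (⇑g)) a) ∧
    ((∀ a, homDelta (fun x y => μ x y) (⇑α) (m + 1) (⇑f) a = 0) →
     (∀ a, homDelta (fun x y => μ x y) (⇑α) (n + 1) (⇑g) a = 0) →
     ∀ a, homDelta (fun x y => μ x y) (⇑α) (m + n + 2)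
        (cupProd (fun x y => μ x y) (⇑α) (⇑f) (⇑g)) a = 0) := by
  have h : IsMultHomAssoc (μ · ·) α := ⟨hassoc, hmult⟩
  refine ⟨homDelta_cupProd_apply h hf hg, fun hδf hδg a => ?_⟩
  simp [homDelta_cupProd_apply h hf hg a, cupProd, hδf, hδg, iterate_map_zero]
end

section
/- In a multiplicative hom-associative algebra, for any f ∈ C^m_α(A,A), g ∈ Cⁿ_α(A,A), h ∈ C^p_α(A,A): (f ∪_α g) ∘ h = (f ∘ h) ∪_α g + (-1)^{m(p-1)} f ∪_α (g ∘ h). -/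
/-!
The insertion slots of `h` into `f ∪_α g` split into the first `m + 1`, which belong to `f`, and
the last `n + 1`, which belong to `g`. Inserting `h` into slot `i` of `f` yields the `i`-th summand
of `(f ∘ h) ∪_α g`, and inserting it into slot `j` of `g` the `j`-th summand of `f ∪_α (g ∘ h)`:
the extra twist `α^p` that the cup product puts on the other factor is pushed inside it by
α-compatibility, and the shift of the slot index by `m + 1` produces the sign `(-1)^{(m+1)p}`.
-/

theorem Fin.sum_univ_add_one_add_one {M : Type*} [AddCommMonoid M] {m n : ℕ}
    (F : Fin (m + n + 1 + 1) → M) :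
    ∑ i, F i
      = ∑ i : Fin (m + 1), F ⟨i, by omega⟩ + ∑ j : Fin (n + 1), F ⟨m + 1 + j, by omega⟩ := by
  rw [← Fin.sum_congr' F (by omega : m + 1 + (n + 1) = _), Fin.sum_univ_add]
  rfl

section

variable {A : Type*}

theorem IsCompat.iterate_apply {α : A → A} {n : ℕ} {f : (Fin n → A) → A}
    (hf : IsCompat α f) (k : ℕ) (a : Fin n → A) :
    α^[k] (f a) = f fun i => α^[k] (a i) := by
  induction k generalizing a with
  | zero => rfl
  | succ k ih =>
    rw [Function.iterate_succ_apply', ih, hf]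
    simp only [Function.iterate_succ_apply']

theorem circI_cupProd_left (μ : A → A → A) (α : A → A) {m n p : ℕ}
    (f : (Fin (m + 1) → A) → A) (g : (Fin (n + 1) → A) → A) (h : (Fin (p + 1) → A) → A)
    (hg : IsCompat α g) (i : Fin (m + 1)) (a : Fin (m + n + 1 + p + 1) → A) :
    circI α ⟨i, by omega⟩ (cupProd μ α f g) h a
      = μ (α^[n] (circI α i f h fun k => a ⟨k, by omega⟩))
          (α^[m + p] (g fun l => a ⟨m + p + 1 + l, by omega⟩)) := by
  simp only [circI, cupProd]
  rw [Function.iterate_add_apply, hg.iterate_apply p]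
  congr 3 with l
  rw [if_neg (by omega), if_neg (by omega)]
  congr 3
  omega

theorem circI_cupProd_right (μ : A → A → A) (α : A → A) {m n p : ℕ}
    (f : (Fin (m + 1) → A) → A) (g : (Fin (n + 1) → A) → A) (h : (Fin (p + 1) → A) → A)
    (hf : IsCompat α f) (j : Fin (n + 1)) (a : Fin (m + n + 1 + p + 1) → A) :
    circI α ⟨m + 1 + j, by omega⟩ (cupProd μ α f g) h a
      = μ (α^[n + p] (f fun s => a ⟨s, by omega⟩))
          (α^[m] (circI α j g h fun l => a ⟨m + 1 + l, by omega⟩)) := by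
  simp only [circI, cupProd]
  rw [Function.iterate_add_apply, hf.iterate_apply p]
  congr 3 with l
  · rw [if_pos (by omega)]
  · by_cases h1 : (l : ℕ) < j
    · rw [if_pos (by omega), if_pos h1]
    by_cases h2 : (l : ℕ) = j
    · rw [if_neg (by omega), if_pos (by omega), if_neg h1, if_pos h2]
      congr 2 with r
      congr 2
      omega
    · rw [if_neg (by omega), if_neg (by omega), if_neg h1, if_neg h2]
      congr 3
      omega

section Linear

variable {K : Type*} [CommSemiring K] [AddCommGroup A] [Module K A]
  (μ : A →ₗ[K] A →ₗ[K] A) (α : A →ₗ[K] A) {m n p : ℕ}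
  (f : (Fin (m + 1) → A) → A) (g : (Fin (n + 1) → A) → A) (h : (Fin (p + 1) → A) → A)

theorem cupProd_vcirc_left (hg : IsCompat α g) (a : Fin (m + n + 1 + p + 1) → A) :
    cupProd (fun x y => μ x y) α (vcirc α f h) g (reindex (by omega) a)
      = ∑ i : Fin (m + 1), ((-1 : ℤ) ^ (p * (i : ℕ))) •
          circI α ⟨i, by omega⟩ (cupProd (fun x y => μ x y) α f g) h a := by
  simp only [cupProd, vcirc, ← Module.End.coe_pow, map_sum, map_zsmul, LinearMap.sum_apply,
    LinearMap.smul_apply]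
  refine Finset.sum_congr rfl fun i _ => ?_
  rw [circI_cupProd_left _ _ f g h hg]
  simp only [Module.End.coe_pow]
  rfl

theorem cupProd_vcirc_right (hf : IsCompat α f) (a : Fin (m + n + 1 + p + 1) → A) :
    ((-1 : ℤ) ^ ((m + 1) * p)) •
        cupProd (fun x y => μ x y) α f (vcirc α g h) (reindex (by omega) a)
      = ∑ j : Fin (n + 1), ((-1 : ℤ) ^ (p * (m + 1 + j))) •
          circI α ⟨m + 1 + j, by omega⟩ (cupProd (fun x y => μ x y) α f g) h a := by
  simp only [cupProd, vcirc, ← Module.End.coe_pow, map_sum, map_zsmul, Finset.smul_sum,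
    smul_smul, ← pow_add]
  refine Finset.sum_congr rfl fun j _ => ?_
  rw [circI_cupProd_right _ _ f g h hf]
  simp only [Module.End.coe_pow]
  congr 2
  ring

end Linear

end

/-- In a multiplicative hom-associative algebra, for `f ∈ C^{m+1}_α`, `g ∈ C^{n+1}_α`,
`h ∈ C^{p+1}_α`: `(f ∪_α g) ∘ h = (f ∘ h) ∪_α g + (-1)^{(m+1)p} f ∪_α (g ∘ h)`. -/
theorem cupProd_circ_distrib
    {K : Type*} [Field K] {A : Type*} [AddCommGroup A] [Module K A]
    (μ : A →ₗ[K] A →ₗ[K] A) (α : A →ₗ[K] A)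
    (m n p : ℕ)
    (f : MultilinearMap K (fun _ : Fin (m + 1) => A) A)
    (g : MultilinearMap K (fun _ : Fin (n + 1) => A) A)
    (h : MultilinearMap K (fun _ : Fin (p + 1) => A) A)
    (hf : IsCompat (⇑α) (⇑f)) (hg : IsCompat (⇑α) (⇑g)) :
    ∀ a : Fin (m + n + p + 2) → A,
      vcirc (⇑α) (cupProd (fun x y => μ x y) (⇑α) (⇑f) (⇑g)) (⇑h)
          (reindex (by omega) a)
        = cupProd (fun x y => μ x y) (⇑α) (vcirc (⇑α) (⇑f) (⇑h)) (⇑g)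
            (reindex (by omega) a)
          + ((-1 : ℤ) ^ ((m + 1) * p)) •
              cupProd (fun x y => μ x y) (⇑α) (⇑f) (vcirc (⇑α) (⇑g) (⇑h))
                (reindex (by omega) a) := by
  intro a
  exact (Fin.sum_univ_add_one_add_one _).trans <| congrArg₂ (· + ·)
    (cupProd_vcirc_left μ α f g h hg _).symm (cupProd_vcirc_right μ α f g h hf _).symm
end
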